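/- arXiv:1905.09269 — 4 statements merged into one kernel-verified Lean document; each statement's English description precedes it below -/
import Mathlib

section
/- Let k and n be natural numbers with n ≥ 1, and let X be an n×n complex matrix. Then the trace of (ad X)^k, where ad X is the linear endomorphism Y ↦ X·Y − Y·X of the space of n×n complex matrices, equals ∑_{i=0}^{k} (−1)^{k−i} · (k choose i) · Tr(X^i) · Tr(X^{k−i}). -/
open Matrix

noncomputable section

/-- The adjoint action `ad X : Y ↦ X·Y − Y·X` as a linear endomorphism of the matrix space. -/
def adM {m : Type*} [Fintype m] [DecidableEq m] (X : Matrix m m ℂ) :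
    Module.End ℂ (Matrix m m ℂ) :=
  LinearMap.mulLeft ℂ X - LinearMap.mulRight ℂ X

theorem adM_apply {m : Type*} [Fintype m] [DecidableEq m] (X Y : Matrix m m ℂ) :
    adM X Y = X * Y - Y * X := rfl


lemma stdBasis_repr_apply {m : Type*} [Fintype m] [DecidableEq m]
    (M : Matrix m m ℂ) (p : m × m) :
    (Matrix.stdBasis ℂ m m).repr M p = M p.1 p.2 := by
  have h : ∀ i j : m, single i j (M i j) = M i j • Matrix.stdBasis ℂ m m (i, j) := by
    intro i j
    rw [Matrix.stdBasis_eq_single, smul_single, smul_eq_mul, mul_one]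
  conv_lhs => rw [matrix_eq_sum_single M]
  simp only [h, map_sum, _root_.map_smul, Module.Basis.repr_self, Finsupp.coe_finset_sum,
    Finset.sum_apply, Finsupp.coe_smul, Pi.smul_apply, Finsupp.single_apply, smul_eq_mul,
    mul_ite, mul_one, mul_zero]
  simp [Prod.ext_iff, ite_and, Finset.sum_ite_eq', Finset.sum_ite_eq]

lemma trace_LR {n : ℕ} (A B : Matrix (Fin n) (Fin n) ℂ) :
    LinearMap.trace ℂ (Matrix (Fin n) (Fin n) ℂ)
      (LinearMap.mulLeft ℂ A * LinearMap.mulRight ℂ B) = A.trace * B.trace := by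
  rw [LinearMap.trace_eq_matrix_trace ℂ (Matrix.stdBasis ℂ (Fin n) (Fin n))]
  rw [Matrix.trace]
  simp only [Matrix.diag_apply, LinearMap.toMatrix_apply, stdBasis_repr_apply,
    Module.End.mul_apply, LinearMap.mulLeft_apply, LinearMap.mulRight_apply]
  rw [Fintype.sum_prod_type, Matrix.trace, Matrix.trace, Finset.sum_mul_sum]
  refine Finset.sum_congr rfl fun i _ => Finset.sum_congr rfl fun j _ => ?_
  rw [Matrix.stdBasis_eq_single]
  have : (A * (single i j (1:ℂ) * B)) (i, j).1 (i, j).2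
      = ∑ l, A i l * (single i j (1:ℂ) * B) l j := Matrix.mul_apply
  rw [this, Finset.sum_eq_single i]
  · simp [Matrix.diag_apply]
  · intro b _ hb
    simp [hb]
  · simp

set_option maxHeartbeats 1000000 in
theorem trace_ad_pow' (k n : ℕ) (hn : 1 ≤ n) (X : Matrix (Fin n) (Fin n) ℂ) :
    LinearMap.trace ℂ (Matrix (Fin n) (Fin n) ℂ)
      ((LinearMap.mulLeft ℂ X - LinearMap.mulRight ℂ X) ^ k)
      = ∑ i ∈ Finset.range (k + 1),
          (-1 : ℂ) ^ (k - i) * (k.choose i : ℂ) * (X ^ i).trace * (X ^ (k - i)).trace := by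
  have hc : Commute (LinearMap.mulLeft ℂ X) (-(LinearMap.mulRight ℂ X)) :=
    (LinearMap.commute_mulLeft_right (R := ℂ) X X).neg_right
  have he := hc.add_pow k
  rw [show (LinearMap.mulLeft ℂ X - LinearMap.mulRight ℂ X)
      = LinearMap.mulLeft ℂ X + -LinearMap.mulRight ℂ X from sub_eq_add_neg _ _, he, map_sum]
  refine Finset.sum_congr rfl fun i hi => ?_
  have h1 : (-(LinearMap.mulRight ℂ X)) ^ (k - i)
      = ((-1 : ℂ) ^ (k - i)) • (LinearMap.mulRight ℂ X) ^ (k - i) := by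
    rw [show -(LinearMap.mulRight ℂ X) = (-1 : ℂ) • LinearMap.mulRight ℂ X from
      (neg_one_smul ℂ _).symm, smul_pow]
  rw [h1]
  have h2 : (LinearMap.mulLeft ℂ X) ^ i * (((-1 : ℂ) ^ (k - i)) • (LinearMap.mulRight ℂ X) ^ (k - i))
        * ((k.choose i : ℕ) : Module.End ℂ (Matrix (Fin n) (Fin n) ℂ))
      = ((-1 : ℂ) ^ (k - i) * (k.choose i : ℂ)) •
          ((LinearMap.mulLeft ℂ X) ^ i * (LinearMap.mulRight ℂ X) ^ (k - i)) := by
    rw [mul_smul_comm, smul_mul_assoc,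
      ← (Nat.cast_commute (k.choose i)
        (LinearMap.mulLeft ℂ X ^ i * LinearMap.mulRight ℂ X ^ (k - i))).eq,
      ← nsmul_eq_mul, ← Nat.cast_smul_eq_nsmul ℂ, smul_smul]
  rw [h2, LinearMap.map_smul, LinearMap.pow_mulLeft, LinearMap.pow_mulRight, trace_LR]
  simp only [smul_eq_mul]
  ring

/-- The trace of `(ad X)^k` on `n×n` complex matrices equals
`∑_{i=0}^{k} (−1)^{k−i} (k choose i) Tr(X^i) Tr(X^{k−i})`. -/
theorem trace_ad_pow (k n : ℕ) (hn : 1 ≤ n) (X : Matrix (Fin n) (Fin n) ℂ) :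
    LinearMap.trace ℂ (Matrix (Fin n) (Fin n) ℂ) (adM X ^ k)
      = ∑ i ∈ Finset.range (k + 1),
          (-1 : ℂ) ^ (k - i) * (k.choose i : ℂ) * (X ^ i).trace * (X ^ (k - i)).trace := by
  exact trace_ad_pow' k n hn X

end
end

section
/- Let n ≥ 1 and let X be a skew-symmetric n×n complex matrix (Xᵀ = −X). Then the trace of (ad X)⁴, viewed as a linear endomorphism of the Lie subalgebra 𝔰𝔬(n,ℂ) of skew-symmetric n×n complex matrices, equals (n − 8)·Tr(X⁴) + 3·(Tr(X²))². -/
open Matrix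

noncomputable section

/-- The subspace `𝔰𝔬(n,ℂ)` of skew-symmetric `n×n` complex matrices. -/
def soSub (n : ℕ) : Submodule ℂ (Matrix (Fin n) (Fin n) ℂ) where
  carrier := {Y | Yᵀ = -Y}
  add_mem' := by
    intro a b ha hb
    simp only [Set.mem_setOf_eq] at *
    rw [Matrix.transpose_add, ha, hb, neg_add]
  zero_mem' := by simp
  smul_mem' := by
    intro c a ha
    simp only [Set.mem_setOf_eq] at *
    rw [Matrix.transpose_smul, ha, smul_neg]

/-- For skew-symmetric `X`, `ad X` preserves `𝔰𝔬(n,ℂ)`. -/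
theorem adM_mem_so {n : ℕ} {X : Matrix (Fin n) (Fin n) ℂ} (hX : Xᵀ = -X) :
    ∀ Y ∈ soSub n, adM X Y ∈ soSub n := by
  intro Y hY
  have hY' : Yᵀ = -Y := hY
  show (adM X Y)ᵀ = -(adM X Y)
  rw [adM_apply, Matrix.transpose_sub, Matrix.transpose_mul, Matrix.transpose_mul, hX, hY']
  simp [Matrix.neg_mul, Matrix.mul_neg, neg_sub]

/-- Transpose as a linear endomorphism of the matrix space. -/
def Tlin (n : ℕ) : Module.End ℂ (Matrix (Fin n) (Fin n) ℂ) where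
  toFun := Matrix.transpose
  map_add' := by intros; simp
  map_smul' := by intros; simp

lemma stdBasis_repr_entry {n : ℕ} (M : Matrix (Fin n) (Fin n) ℂ) (p : Fin n × Fin n) :
    (Matrix.stdBasis ℂ (Fin n) (Fin n)).repr M p = M p.1 p.2 := by
  have h : M = ∑ q : Fin n × Fin n, M q.1 q.2 • Matrix.stdBasis ℂ (Fin n) (Fin n) q := by
    ext i j
    simp [Matrix.stdBasis_eq_single, Matrix.sum_apply, Matrix.single,
      Fintype.sum_prod_type]
    rw [Finset.sum_eq_single i, Finset.sum_eq_single j] <;> simp +contextual [eq_comm]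
  conv_lhs => rw [h]
  rw [map_sum, Finsupp.finset_sum_apply]
  simp [Finsupp.single_apply]

lemma trace_entry {n : ℕ} (g : Module.End ℂ (Matrix (Fin n) (Fin n) ℂ)) :
    LinearMap.trace ℂ _ g = ∑ p : Fin n × Fin n, g (Matrix.single p.1 p.2 1) p.1 p.2 := by
  rw [LinearMap.trace_eq_matrix_trace ℂ (Matrix.stdBasis ℂ (Fin n) (Fin n))]
  rw [Matrix.trace]
  congr 1
  ext p
  rw [Matrix.diag, LinearMap.toMatrix_apply, Matrix.stdBasis_eq_single,
    stdBasis_repr_entry]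

lemma entryLR {n : ℕ} (A B : Matrix (Fin n) (Fin n) ℂ) (i j : Fin n) :
    (A * (Matrix.single i j (1:ℂ) * B)) i j = A i i * B j j := by
  rw [Matrix.mul_apply, Finset.sum_eq_single i]
  · rw [Matrix.single_mul_apply_same, one_mul]
  · intro k _ hk
    rw [Matrix.single_mul_apply_of_ne _ _ _ _ _ hk, mul_zero]
  · simp

lemma trLR {n : ℕ} (A B : Matrix (Fin n) (Fin n) ℂ) :
    LinearMap.trace ℂ _ (LinearMap.mulLeft ℂ A * LinearMap.mulRight ℂ B)
      = A.trace * B.trace := by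
  rw [trace_entry]
  simp only [Module.End.mul_apply, LinearMap.mulLeft_apply, LinearMap.mulRight_apply, entryLR]
  rw [Matrix.trace, Matrix.trace, Finset.sum_mul_sum, ← Finset.sum_product']
  rfl

lemma transpose_std {n : ℕ} (i j : Fin n) :
    (Matrix.single i j (1:ℂ))ᵀ = Matrix.single j i (1:ℂ) := by
  ext a b
  simp [Matrix.single, and_comm]

lemma entryLRT {n : ℕ} (A B : Matrix (Fin n) (Fin n) ℂ) (i j : Fin n) :
    (A * (Matrix.single j i (1:ℂ) * B)) i j = A i j * B i j := by
  rw [Matrix.mul_apply, Finset.sum_eq_single j]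
  · rw [Matrix.single_mul_apply_same, one_mul]
  · intro k _ hk
    rw [Matrix.single_mul_apply_of_ne _ _ _ _ _ hk, mul_zero]
  · simp

lemma trLRT {n : ℕ} (A B : Matrix (Fin n) (Fin n) ℂ) :
    LinearMap.trace ℂ _ (LinearMap.mulLeft ℂ A * LinearMap.mulRight ℂ B * Tlin n)
      = (A * Bᵀ).trace := by
  rw [trace_entry]
  have hT : ∀ M : Matrix (Fin n) (Fin n) ℂ, Tlin n M = Mᵀ := fun _ => rfl
  simp only [Module.End.mul_apply, LinearMap.mulLeft_apply, LinearMap.mulRight_apply, hT,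
    transpose_std, entryLRT]
  rw [Matrix.trace, Fintype.sum_prod_type]
  refine Finset.sum_congr rfl fun i _ => ?_
  simp [Matrix.mul_apply, Matrix.diag]

/-- Projection onto the skew-symmetric part, landing in `soSub n`. -/
def piSo (n : ℕ) : Matrix (Fin n) (Fin n) ℂ →ₗ[ℂ] ↥(soSub n) :=
  LinearMap.codRestrict (soSub n) ((1/2 : ℂ) • (LinearMap.id - Tlin n))
    (by
      intro Y
      show ((1/2:ℂ) • (Y - Yᵀ))ᵀ = -((1/2:ℂ) • (Y - Yᵀ))
      rw [Matrix.transpose_smul, Matrix.transpose_sub, Matrix.transpose_transpose, ← smul_neg,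
        neg_sub])

lemma trace_restrict_eq {n : ℕ} (f : Module.End ℂ (Matrix (Fin n) (Fin n) ℂ))
    (hf : ∀ x ∈ soSub n, f x ∈ soSub n) :
    LinearMap.trace ℂ _ (f.restrict hf)
      = LinearMap.trace ℂ _ ((1/2 : ℂ) • (f - f * Tlin n)) := by
  have h1 : f.restrict hf = (piSo n) ∘ₗ (f ∘ₗ (soSub n).subtype) := by
    refine LinearMap.ext fun x => Subtype.ext ?_
    obtain ⟨x, hx⟩ := x
    have hfs : (f x)ᵀ = -(f x) := hf x hx
    show f x = ((1/2:ℂ) • (f x - (f x)ᵀ))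
    rw [hfs, sub_neg_eq_add, smul_add, ← add_smul]
    norm_num
  rw [h1, LinearMap.trace_comp_comm']
  congr 1
  refine LinearMap.ext fun Y => ?_
  show f ((1/2:ℂ) • (Y - Yᵀ)) = ((1/2:ℂ) • (f Y - f Yᵀ))
  rw [LinearMap.map_smul, LinearMap.map_sub]

lemma adM_pow_four {n : ℕ} (X : Matrix (Fin n) (Fin n) ℂ) : adM X ^ 4 =
    LinearMap.mulLeft ℂ (X^4) * LinearMap.mulRight ℂ (X^0)
    - (4:ℕ) • (LinearMap.mulLeft ℂ (X^3) * LinearMap.mulRight ℂ (X^1))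
    + (6:ℕ) • (LinearMap.mulLeft ℂ (X^2) * LinearMap.mulRight ℂ (X^2))
    - (4:ℕ) • (LinearMap.mulLeft ℂ (X^1) * LinearMap.mulRight ℂ (X^3))
    + LinearMap.mulLeft ℂ (X^0) * LinearMap.mulRight ℂ (X^4) := by
  refine LinearMap.ext fun Y => ?_
  have h4 : adM X ^ 4 = adM X * (adM X * (adM X * adM X)) := by
    rw [pow_succ, pow_succ, pow_succ, pow_one, mul_assoc, mul_assoc]
  rw [h4]
  simp only [Module.End.mul_apply, adM_apply, LinearMap.add_apply, LinearMap.sub_apply,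
    LinearMap.smul_apply, LinearMap.mulLeft_apply, LinearMap.mulRight_apply]
  noncomm_ring

/-- For skew-symmetric `X`, the trace of `(ad X)⁴` on `𝔰𝔬(n,ℂ)` equals
`(n−8)·Tr(X⁴) + 3·(Tr(X²))²`. -/
theorem so_trace_ad_four (n : ℕ) (hn : 1 ≤ n) (X : Matrix (Fin n) (Fin n) ℂ) (hX : Xᵀ = -X) :
    LinearMap.trace ℂ ↥(soSub n) (((adM X).restrict (adM_mem_so hX)) ^ 4)
      = ((n : ℂ) - 8) * (X ^ 4).trace + 3 * ((X ^ 2).trace) ^ 2 := by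
  -- basic trace facts for skew-symmetric X
  have htr1 : X.trace = 0 := by
    have := Matrix.trace_transpose X
    rw [hX, Matrix.trace_neg] at this
    linear_combination (-1/2 : ℂ) * this
  have htr3 : (X ^ 3).trace = 0 := by
    have := Matrix.trace_transpose (X ^ 3)
    rw [Matrix.transpose_pow, hX, Odd.neg_pow (by decide : Odd 3), Matrix.trace_neg] at this
    linear_combination (-1/2 : ℂ) * this
  have hT2 : (Xᵀ) ^ 2 = X ^ 2 := by rw [hX, Even.neg_pow ⟨1, rfl⟩]
  have hT3 : (Xᵀ) ^ 3 = -(X ^ 3) := by rw [hX, Odd.neg_pow (by decide : Odd 3)]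
  have hT4 : (Xᵀ) ^ 4 = X ^ 4 := by rw [hX, Even.neg_pow ⟨2, rfl⟩]
  rw [Module.End.pow_restrict, trace_restrict_eq]
  rw [LinearMap.map_smul, map_sub]
  have e4 := adM_pow_four X
  -- trace of (ad X)^4 on the full matrix space
  have tA : LinearMap.trace ℂ _ (adM X ^ 4)
      = 2 * n * (X ^ 4).trace + 6 * ((X ^ 2).trace) ^ 2 := by
    rw [e4, map_add, map_sub, map_add, map_sub, map_nsmul, map_nsmul, map_nsmul,
      trLR, trLR, trLR, trLR, trLR]
    simp only [pow_zero, Matrix.trace_one, pow_one, htr1, htr3, Fintype.card_fin]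
    push_cast
    ring
  -- trace of (ad X)^4 ∘ transpose on the full matrix space
  have tB : LinearMap.trace ℂ _ ((adM X ^ 4) * Tlin n) = 16 * (X ^ 4).trace := by
    rw [e4]
    simp only [sub_mul, add_mul, smul_mul_assoc]
    rw [map_add, map_sub, map_add, map_sub, map_nsmul, map_nsmul, map_nsmul,
      trLRT, trLRT, trLRT, trLRT, trLRT]
    rw [Matrix.transpose_pow, Matrix.transpose_pow, Matrix.transpose_pow, Matrix.transpose_pow,
      Matrix.transpose_pow, hT2, hT3, hT4]
    simp only [pow_zero, pow_one, hX, Matrix.transpose_one, Matrix.mul_one, Matrix.one_mul,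
      Matrix.mul_neg, Matrix.trace_neg]
    rw [show X * X ^ 3 = X ^ 4 by rw [← pow_succ'], show X ^ 3 * X = X ^ 4 by rw [← pow_succ],
      show X ^ 2 * X ^ 2 = X ^ 4 by rw [← pow_add]]
    simp only [nsmul_eq_mul]
    push_cast
    ring
  rw [tA, tB]
  rw [smul_eq_mul]
  ring

end
end

section
/- Let n ≥ 4. There exists a complex constant c such that for every skew-symmetric n×n complex matrix X the trace of (ad X)⁴ on 𝔰𝔬(n,ℂ) equals c·(Tr(X²))², if and only if n = 8 (in which case c = 3). -/
open Matrix

noncomputable section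

/-! ### Auxiliary machinery -/

section Aux

set_option linter.unusedSectionVars false

variable {m : Type*} [Fintype m] [DecidableEq m]

lemma aux_stdBasis_repr (M : Matrix m m ℂ) (i j : m) :
    (Matrix.stdBasis ℂ m m).repr M (i,j) = M i j := by
  simp [Matrix.stdBasis, Pi.basis_repr]

lemma aux_trace_eq_sum_entries (f : Module.End ℂ (Matrix m m ℂ)) :
    LinearMap.trace ℂ _ f = ∑ p : m × m, (f (Matrix.single p.1 p.2 1)) p.1 p.2 := by
  rw [LinearMap.trace_eq_matrix_trace ℂ (Matrix.stdBasis ℂ m m)]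
  rw [Matrix.trace]
  refine Finset.sum_congr rfl fun p _ => ?_
  rw [Matrix.diag_apply, LinearMap.toMatrix_apply, Matrix.stdBasis_eq_single]
  exact aux_stdBasis_repr _ _ _

/-- `Y ↦ A·Y·B` as a linear endomorphism. -/
def gLR (A B : Matrix m m ℂ) : Module.End ℂ (Matrix m m ℂ) :=
  LinearMap.mulLeft ℂ A ∘ₗ LinearMap.mulRight ℂ B

lemma aux_trace_gLR (A B : Matrix m m ℂ) :
    LinearMap.trace ℂ _ (gLR A B) = A.trace * B.trace := by
  rw [aux_trace_eq_sum_entries]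
  simp only [gLR, LinearMap.comp_apply, LinearMap.mulLeft_apply, LinearMap.mulRight_apply]
  rw [Fintype.sum_prod_type, Matrix.trace, Matrix.trace, Finset.sum_mul_sum]
  refine Finset.sum_congr rfl fun i _ => Finset.sum_congr rfl fun j _ => ?_
  rw [← mul_assoc, Matrix.mul_apply]
  rw [Finset.sum_eq_single j]
  · simp
  · intro k _ hk; simp [hk]
  · simp

/-- transpose as a linear endomorphism -/
def tpose : Module.End ℂ (Matrix m m ℂ) where
  toFun M := Mᵀ
  map_add' := by intros; simp
  map_smul' := by intros; simp

@[simp] lemma tpose_apply (M : Matrix m m ℂ) : (tpose M) = Mᵀ := rfl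

lemma aux_trace_gLR_tpose (A B : Matrix m m ℂ) :
    LinearMap.trace ℂ _ (gLR A B ∘ₗ tpose) = (A * Bᵀ).trace := by
  rw [aux_trace_eq_sum_entries]
  simp only [gLR, LinearMap.comp_apply, LinearMap.mulLeft_apply, LinearMap.mulRight_apply]
  have ht : ∀ (i j : m), tpose (Matrix.single i j (1:ℂ)) = Matrix.single j i 1 := by
    intro i j; ext a b; simp [tpose_apply, Matrix.single, and_comm]
  rw [Fintype.sum_prod_type, Matrix.trace]
  refine Finset.sum_congr rfl fun i _ => ?_
  rw [Matrix.diag_apply, Matrix.mul_apply]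
  refine Finset.sum_congr rfl fun j _ => ?_
  rw [ht, ← mul_assoc, Matrix.mul_apply]
  rw [Finset.sum_eq_single i]
  · simp [Matrix.transpose_apply]
  · intro k _ hk; simp [hk]
  · simp

lemma aux_adM_pow4 (X : Matrix m m ℂ) :
    (adM X)^4 = gLR (X^4) 1 - 4 • gLR (X^3) X + 6 • gLR (X^2) (X^2)
      - 4 • gLR X (X^3) + gLR 1 (X^4) := by
  refine LinearMap.ext fun Y => ?_
  simp only [pow_succ, pow_zero, one_mul, Module.End.mul_apply, LinearMap.add_apply,
    LinearMap.sub_apply, LinearMap.smul_apply, adM_apply, gLR, LinearMap.comp_apply,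
    LinearMap.mulLeft_apply, LinearMap.mulRight_apply, smul_sub, smul_add]
  noncomm_ring

end Aux

/-- projection onto the skew-symmetric part -/
def skewProj (n : ℕ) : Module.End ℂ (Matrix (Fin n) (Fin n) ℂ) :=
  (2⁻¹ : ℂ) • (LinearMap.id - tpose)

lemma skewProj_mem (n : ℕ) : ∀ Y, skewProj n Y ∈ soSub n := by
  intro Y
  show ((2⁻¹:ℂ) • (Y - Yᵀ))ᵀ = -((2⁻¹:ℂ) • (Y - Yᵀ))
  rw [Matrix.transpose_smul, Matrix.transpose_sub, Matrix.transpose_transpose, ← smul_neg,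
    neg_sub]

/-- Trace of the restriction to `𝔰𝔬(n)` in terms of full-space traces. -/
lemma trace_restrict_so {n : ℕ} (f : Module.End ℂ (Matrix (Fin n) (Fin n) ℂ))
    (hf : ∀ Y ∈ soSub n, f Y ∈ soSub n) :
    LinearMap.trace ℂ ↥(soSub n) (f.restrict hf)
      = (2⁻¹ : ℂ) * (LinearMap.trace ℂ _ f - LinearMap.trace ℂ _ (f ∘ₗ tpose)) := by
  set π : Matrix (Fin n) (Fin n) ℂ →ₗ[ℂ] ↥(soSub n) :=
    LinearMap.codRestrict (soSub n) (skewProj n) (skewProj_mem n) with hπ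
  have h1 : f.restrict hf = π ∘ₗ (f ∘ₗ (soSub n).subtype) := by
    refine LinearMap.ext fun Y => Subtype.ext ?_
    have hskew : (f (Y : Matrix (Fin n) (Fin n) ℂ))ᵀ = -(f Y) := hf Y Y.2
    show f (Y : Matrix (Fin n) (Fin n) ℂ) = skewProj n (f Y)
    show _ = (2⁻¹:ℂ) • (f (Y : Matrix (Fin n) (Fin n) ℂ) - (f Y)ᵀ)
    rw [hskew]
    module
  rw [h1, LinearMap.trace_comp_comm']
  have h2 : (f ∘ₗ (soSub n).subtype) ∘ₗ π = f ∘ₗ skewProj n := by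
    rw [LinearMap.comp_assoc, hπ, LinearMap.subtype_comp_codRestrict]
  have h3 : f ∘ₗ skewProj n = (2⁻¹:ℂ) • (f - f ∘ₗ tpose) := by
    refine LinearMap.ext fun Y => ?_
    simp only [LinearMap.comp_apply, skewProj, LinearMap.smul_apply, LinearMap.sub_apply,
      LinearMap.id_apply, tpose_apply, _root_.map_smul, _root_.map_sub]
  rw [h2, h3, _root_.map_smul, _root_.map_sub, smul_eq_mul]

lemma trace_odd_zero {n : ℕ} {X : Matrix (Fin n) (Fin n) ℂ} (hX : Xᵀ = -X)
    {k : ℕ} (hk : Odd k) : (X ^ k).trace = 0 := by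
  have h : ((X ^ k)ᵀ).trace = (X ^ k).trace := Matrix.trace_transpose _
  rw [Matrix.transpose_pow, hX, hk.neg_pow, Matrix.trace_neg] at h
  linear_combination (-1/2 : ℂ) * h

/-- The key trace formula: `Tr_so((ad X)⁴) = (n−8)·Tr(X⁴) + 3·(Tr X²)²`. -/
lemma key_formula {n : ℕ} (X : Matrix (Fin n) (Fin n) ℂ) (hX : Xᵀ = -X) :
    LinearMap.trace ℂ ↥(soSub n) (((adM X).restrict (adM_mem_so hX)) ^ 4)
      = ((n : ℂ) - 8) * (X ^ 4).trace + 3 * ((X ^ 2).trace) ^ 2 := by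
  have hres : ((adM X).restrict (adM_mem_so hX)) ^ 4
      = ((adM X) ^ 4).restrict (fun Y hY => by
          have h1 := adM_mem_so hX
          have := h1 _ (h1 _ (h1 _ (h1 _ hY)))
          simpa [pow_succ, Module.End.mul_apply] using this) := by
    refine LinearMap.ext fun Y => Subtype.ext ?_
    simp [pow_succ, Module.End.mul_apply, LinearMap.restrict_coe_apply]
  rw [hres, trace_restrict_so]
  have h1 : (X : Matrix (Fin n) (Fin n) ℂ).trace = 0 := by
    simpa using trace_odd_zero hX (k := 1) (by norm_num)
  have h3 : (X ^ 3).trace = 0 := trace_odd_zero hX (by decide)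
  have hT2 : (X ^ 2)ᵀ = X ^ 2 := by rw [Matrix.transpose_pow, hX, Even.neg_pow (by decide)]
  have hT3 : (X ^ 3)ᵀ = -(X ^ 3) := by
    rw [Matrix.transpose_pow, hX, Odd.neg_pow (by decide)]
  have hT4 : (X ^ 4)ᵀ = X ^ 4 := by
    rw [Matrix.transpose_pow, hX, Even.neg_pow (by decide)]
  have hXX : X ^ 3 * X = X ^ 4 := (pow_succ X 3).symm
  have hXX2 : X ^ 2 * X ^ 2 = X ^ 4 := by rw [← pow_add]
  have hXX3 : X * X ^ 3 = X ^ 4 := (pow_succ' X 3).symm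
  have e1 : LinearMap.trace ℂ _ ((adM X) ^ 4)
      = 2 * (n : ℂ) * (X ^ 4).trace + 6 * ((X ^ 2).trace) ^ 2 := by
    rw [aux_adM_pow4, map_add, map_sub, map_add, map_sub, map_nsmul, map_nsmul, map_nsmul,
      aux_trace_gLR, aux_trace_gLR, aux_trace_gLR, aux_trace_gLR, aux_trace_gLR,
      Matrix.trace_one, h1, h3]
    push_cast [Fintype.card_fin]
    ring
  have e2 : LinearMap.trace ℂ _ (((adM X) ^ 4) ∘ₗ tpose) = 16 * (X ^ 4).trace := by
    rw [aux_adM_pow4, LinearMap.add_comp, LinearMap.sub_comp, LinearMap.add_comp,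
      LinearMap.sub_comp, LinearMap.smul_comp, LinearMap.smul_comp, LinearMap.smul_comp,
      map_add, map_sub, map_add, map_sub, map_nsmul, map_nsmul, map_nsmul,
      aux_trace_gLR_tpose, aux_trace_gLR_tpose, aux_trace_gLR_tpose, aux_trace_gLR_tpose,
      aux_trace_gLR_tpose, Matrix.transpose_one, hX, hT2, hT3, hT4]
    rw [Matrix.mul_neg, Matrix.mul_neg, Matrix.trace_neg, Matrix.trace_neg,
      hXX, hXX2, hXX3, Matrix.mul_one, Matrix.one_mul]
    ring
  rw [e1, e2]
  ring

lemma aux_transpose_std {m : Type*} [DecidableEq m] (i j : m) (c : ℂ) :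
    (Matrix.single i j c)ᵀ = Matrix.single j i c := by
  ext a b; simp [Matrix.single, and_comm]


section Witness

lemma aux_witness (n : ℕ) (hn : 4 ≤ n) :
    ∃ (A B : Matrix (Fin n) (Fin n) ℂ), Aᵀ = -A ∧ Bᵀ = -B ∧
      (A ^ 2).trace = -4 ∧ (A ^ 4).trace = 4 ∧
      (B ^ 2).trace = -2 ∧ (B ^ 4).trace = 2 := by
  have H0 : 0 < n := by omega
  have H1 : 1 < n := by omega
  have H2 : 2 < n := by omega
  have H3 : 3 < n := by omega
  set i0 : Fin n := ⟨0, H0⟩ with hi0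
  set i1 : Fin n := ⟨1, H1⟩ with hi1
  set i2 : Fin n := ⟨2, H2⟩ with hi2
  set i3 : Fin n := ⟨3, H3⟩ with hi3
  have h01 : i0 ≠ i1 := by simp [hi0, hi1, Fin.ext_iff]
  have h10 : i1 ≠ i0 := h01.symm
  have h02 : i0 ≠ i2 := by simp [hi0, hi2, Fin.ext_iff]
  have h20 : i2 ≠ i0 := h02.symm
  have h03 : i0 ≠ i3 := by simp [hi0, hi3, Fin.ext_iff]
  have h30 : i3 ≠ i0 := h03.symm
  have h12 : i1 ≠ i2 := by simp [hi1, hi2, Fin.ext_iff]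
  have h21 : i2 ≠ i1 := h12.symm
  have h13 : i1 ≠ i3 := by simp [hi1, hi3, Fin.ext_iff]
  have h31 : i3 ≠ i1 := h13.symm
  have h23 : i2 ≠ i3 := by simp [hi2, hi3, Fin.ext_iff]
  have h32 : i3 ≠ i2 := h23.symm
  have hA2 : (Matrix.single i0 i1 (1:ℂ) - Matrix.single i1 i0 1 + Matrix.single i2 i3 1 - Matrix.single i3 i2 1) * (Matrix.single i0 i1 (1:ℂ) - Matrix.single i1 i0 1 + Matrix.single i2 i3 1 - Matrix.single i3 i2 1) = -(Matrix.single i0 i0 (1:ℂ) + Matrix.single i1 i1 1 + Matrix.single i2 i2 1 + Matrix.single i3 i3 1) := by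
    simp only [sub_mul, add_mul, mul_sub, mul_add,
      Matrix.single_mul_single_same, Matrix.single_mul_single_of_ne,
      h01, h10, h02, h20, h03, h30, h12, h21, h13, h31, h23, h32,
      ne_eq, not_false_eq_true, mul_one]
    abel
  have hB2 : (Matrix.single i0 i1 (1:ℂ) - Matrix.single i1 i0 1) * (Matrix.single i0 i1 (1:ℂ) - Matrix.single i1 i0 1) = -(Matrix.single i0 i0 (1:ℂ) + Matrix.single i1 i1 1) := by
    simp only [sub_mul, mul_sub,
      Matrix.single_mul_single_same, Matrix.single_mul_single_of_ne,
      h01, h10, ne_eq, not_false_eq_true, mul_one]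
    abel
  have hP2 : (Matrix.single i0 i0 (1:ℂ) + Matrix.single i1 i1 1 + Matrix.single i2 i2 1 + Matrix.single i3 i3 1) * (Matrix.single i0 i0 (1:ℂ) + Matrix.single i1 i1 1 + Matrix.single i2 i2 1 + Matrix.single i3 i3 1) = (Matrix.single i0 i0 (1:ℂ) + Matrix.single i1 i1 1 + Matrix.single i2 i2 1 + Matrix.single i3 i3 1) := by
    simp only [add_mul, mul_add,
      Matrix.single_mul_single_same, Matrix.single_mul_single_of_ne,
      h01, h10, h02, h20, h03, h30, h12, h21, h13, h31, h23, h32,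
      ne_eq, not_false_eq_true, mul_one]
    abel
  have hQ2 : (Matrix.single i0 i0 (1:ℂ) + Matrix.single i1 i1 1) * (Matrix.single i0 i0 (1:ℂ) + Matrix.single i1 i1 1) = (Matrix.single i0 i0 (1:ℂ) + Matrix.single i1 i1 1) := by
    simp only [add_mul, mul_add,
      Matrix.single_mul_single_same, Matrix.single_mul_single_of_ne,
      h01, h10, ne_eq, not_false_eq_true, mul_one]
    abel
  have htrP : ((Matrix.single i0 i0 (1:ℂ) + Matrix.single i1 i1 1 + Matrix.single i2 i2 1 + Matrix.single i3 i3 1) : Matrix (Fin n) (Fin n) ℂ).trace = 4 := by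
    simp only [Matrix.trace_add, Matrix.trace_single_eq_same]
    norm_num
  have htrQ : ((Matrix.single i0 i0 (1:ℂ) + Matrix.single i1 i1 1) : Matrix (Fin n) (Fin n) ℂ).trace = 2 := by
    simp only [Matrix.trace_add, Matrix.trace_single_eq_same]
    norm_num
  refine ⟨(Matrix.single i0 i1 (1:ℂ) - Matrix.single i1 i0 1 + Matrix.single i2 i3 1 - Matrix.single i3 i2 1), (Matrix.single i0 i1 (1:ℂ) - Matrix.single i1 i0 1), ?_, ?_, ?_, ?_, ?_, ?_⟩
  · simp only [Matrix.transpose_sub, Matrix.transpose_add, aux_transpose_std]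
    abel
  · simp only [Matrix.transpose_sub, aux_transpose_std]
    abel
  · rw [pow_two, hA2, Matrix.trace_neg, htrP]
  · rw [show (4:ℕ) = 2 * 2 from rfl, pow_mul, pow_two, pow_two, hA2,
      Matrix.neg_mul, Matrix.mul_neg, neg_neg, hP2, htrP]
  · rw [pow_two, hB2, Matrix.trace_neg, htrQ]
  · rw [show (4:ℕ) = 2 * 2 from rfl, pow_mul, pow_two, pow_two, hB2,
      Matrix.neg_mul, Matrix.mul_neg, neg_neg, hQ2, htrQ]

end Witness

/-- For `n ≥ 4`, there exists a constant `c` with `Tr_ad((ad X)⁴) = c·(Tr(X²))²` for all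
skew-symmetric `X` if and only if `n = 8`, in which case `c = 3`. -/
theorem so_quartic_proportional_iff (n : ℕ) (hn : 4 ≤ n) :
    ((∃ c : ℂ, ∀ (X : Matrix (Fin n) (Fin n) ℂ) (hX : Xᵀ = -X),
        LinearMap.trace ℂ ↥(soSub n) (((adM X).restrict (adM_mem_so hX)) ^ 4)
          = c * ((X ^ 2).trace) ^ 2) ↔ n = 8) ∧
    (n = 8 → ∀ (X : Matrix (Fin n) (Fin n) ℂ) (hX : Xᵀ = -X),
        LinearMap.trace ℂ ↥(soSub n) (((adM X).restrict (adM_mem_so hX)) ^ 4)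
          = 3 * ((X ^ 2).trace) ^ 2) := by
  have hgoal8 : n = 8 → ∀ (X : Matrix (Fin n) (Fin n) ℂ) (hX : Xᵀ = -X),
      LinearMap.trace ℂ ↥(soSub n) (((adM X).restrict (adM_mem_so hX)) ^ 4)
        = 3 * ((X ^ 2).trace) ^ 2 := by
    intro h8 X hX
    have hz : ((n : ℂ) - 8) = 0 := by rw [h8]; norm_num
    rw [key_formula X hX, hz]
    ring
  refine ⟨⟨?_, fun h8 => ⟨3, hgoal8 h8⟩⟩, hgoal8⟩
  rintro ⟨c, hc⟩
  obtain ⟨A, B, hAs, hBs, hA2, hA4, hB2, hB4⟩ := aux_witness n hn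
  have eA : ((n : ℂ) - 8) * 4 + 3 * (-4 : ℂ) ^ 2 = c * (-4 : ℂ) ^ 2 := by
    have h1 := key_formula A hAs
    have h2 := hc A hAs
    rw [hA4, hA2] at h1
    rw [hA2] at h2
    rw [← h1, h2]
  have eB : ((n : ℂ) - 8) * 2 + 3 * (-2 : ℂ) ^ 2 = c * (-2 : ℂ) ^ 2 := by
    have h1 := key_formula B hBs
    have h2 := hc B hBs
    rw [hB4, hB2] at h1
    rw [hB2] at h2
    rw [← h1, h2]
  have hcn : (n : ℂ) = 8 := by linear_combination (-1/4 : ℂ) * eA + eB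
  exact_mod_cast hcn

end
end

section
/- Let n ≥ 1, let J be the standard 2n×2n symplectic matrix (in block form J = [[0, −1],[1, 0]]), and let X be a 2n×2n complex matrix with Xᵀ·J = −J·X. Then the trace of (ad X)⁴, viewed as a linear endomorphism of the Lie subalgebra 𝔰𝔭(2n,ℂ) = {Y : Yᵀ·J = −J·Y}, equals (2n + 8)·Tr(X⁴) + 3·(Tr(X²))². -/
open Matrix

noncomputable section

/-- The subspace `𝔰𝔭(2n,ℂ)` of `2n×2n` complex matrices `Y` with `Yᵀ·J = −J·Y`,
where `J = [[0,−1],[1,0]]` is the standard symplectic matrix `Matrix.J`. -/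
def spSub (n : ℕ) : Submodule ℂ (Matrix (Fin n ⊕ Fin n) (Fin n ⊕ Fin n) ℂ) where
  carrier := {Y | Yᵀ * Matrix.J (Fin n) ℂ = -(Matrix.J (Fin n) ℂ * Y)}
  add_mem' := by
    intro a b ha hb
    simp only [Set.mem_setOf_eq] at *
    rw [Matrix.transpose_add, Matrix.add_mul, ha, hb, Matrix.mul_add, neg_add]
  zero_mem' := by simp
  smul_mem' := by
    intro c a ha
    simp only [Set.mem_setOf_eq] at *
    rw [Matrix.transpose_smul, Matrix.smul_mul, ha, Matrix.mul_smul, smul_neg]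

theorem key_mul {n : ℕ} {J A B : Matrix (Fin n ⊕ Fin n) (Fin n ⊕ Fin n) ℂ}
    (hA : Aᵀ * J = -(J * A)) (hB : Bᵀ * J = -(J * B)) :
    (A * B)ᵀ * J = J * (B * A) := by
  rw [Matrix.transpose_mul, Matrix.mul_assoc, hA, Matrix.mul_neg, ← Matrix.mul_assoc, hB,
    Matrix.neg_mul, neg_neg, Matrix.mul_assoc]

/-- For `X ∈ 𝔰𝔭(2n,ℂ)`, `ad X` preserves `𝔰𝔭(2n,ℂ)`. -/
theorem adM_mem_sp {n : ℕ} {X : Matrix (Fin n ⊕ Fin n) (Fin n ⊕ Fin n) ℂ}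
    (hX : Xᵀ * Matrix.J (Fin n) ℂ = -(Matrix.J (Fin n) ℂ * X)) :
    ∀ Y ∈ spSub n, adM X Y ∈ spSub n := by
  intro Y hY
  have hY' : Yᵀ * Matrix.J (Fin n) ℂ = -(Matrix.J (Fin n) ℂ * Y) := hY
  show (adM X Y)ᵀ * Matrix.J (Fin n) ℂ = -(Matrix.J (Fin n) ℂ * adM X Y)
  rw [adM_apply, Matrix.transpose_sub, Matrix.sub_mul, key_mul hX hY', key_mul hY' hX,
    Matrix.mul_sub, neg_sub]

section aux
variable {m : Type*} [Fintype m] [DecidableEq m]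

/-- `Y ↦ A * Y * B` as a linear endomorphism. -/
def phiM (A B : Matrix m m ℂ) : Module.End ℂ (Matrix m m ℂ) where
  toFun Y := A * Y * B
  map_add' Y Z := by simp [Matrix.mul_add, Matrix.add_mul]
  map_smul' c Y := by simp

/-- `Y ↦ A * Yᵀ * B` as a linear endomorphism. -/
def tphiM (A B : Matrix m m ℂ) : Module.End ℂ (Matrix m m ℂ) where
  toFun Y := A * Yᵀ * B
  map_add' Y Z := by simp [Matrix.mul_add, Matrix.add_mul]
  map_smul' c Y := by simp

@[simp] theorem phiM_apply (A B Y : Matrix m m ℂ) : phiM A B Y = A * Y * B := rfl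
@[simp] theorem tphiM_apply (A B Y : Matrix m m ℂ) : tphiM A B Y = A * Yᵀ * B := rfl

theorem phiM_comp (A B C D : Matrix m m ℂ) :
    phiM A B * phiM C D = phiM (A * C) (D * B) := by
  ext Y : 1
  show A * (C * Y * D) * B = (A * C) * Y * (D * B)
  noncomm_ring

theorem phiM_comp_tphiM (A B C D : Matrix m m ℂ) :
    phiM A B * tphiM C D = tphiM (A * C) (D * B) := by
  ext Y : 1
  show A * (C * Yᵀ * D) * B = (A * C) * Yᵀ * (D * B)
  noncomm_ring

omit [DecidableEq m] in
theorem stdBasis_repr_eq (M : Matrix m m ℂ) (i j : m) :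
    (Matrix.stdBasis ℂ m m).repr M (i, j) = M i j := by
  simp [Matrix.stdBasis, Module.Basis.repr_reindex, Pi.basis_repr, Matrix.ofLinearEquiv]

theorem trace_matrix_end (f : Module.End ℂ (Matrix m m ℂ)) :
    LinearMap.trace ℂ (Matrix m m ℂ) f
      = ∑ p : m × m, (f (single p.1 p.2 1)) p.1 p.2 := by
  rw [LinearMap.trace_eq_matrix_trace ℂ (Matrix.stdBasis ℂ m m), Matrix.trace]
  refine Finset.sum_congr rfl fun p _ => ?_
  rw [Matrix.diag_apply, LinearMap.toMatrix_apply, Matrix.stdBasis_eq_single,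
    stdBasis_repr_eq]

theorem trace_phiM (A B : Matrix m m ℂ) :
    LinearMap.trace ℂ (Matrix m m ℂ) (phiM A B) = A.trace * B.trace := by
  rw [trace_matrix_end]
  simp only [phiM_apply]
  rw [Fintype.sum_prod_type]
  have : ∀ i j : m, (A * single i j (1:ℂ) * B) i j = A i i * B j j := by
    intro i j
    rw [Matrix.mul_apply]
    rw [Finset.sum_eq_single j]
    · simp
    · intro b _ hb; simp [Matrix.mul_single_apply_of_ne _ _ _ _ _ hb]
    · simp
  simp_rw [this, ← Finset.sum_mul_sum]
  rw [Matrix.trace, Matrix.trace]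
  simp [Matrix.diag]

theorem trace_tphiM (A B : Matrix m m ℂ) :
    LinearMap.trace ℂ (Matrix m m ℂ) (tphiM A B) = (A * Bᵀ).trace := by
  rw [trace_matrix_end]
  simp only [tphiM_apply]
  rw [Fintype.sum_prod_type]
  have : ∀ i j : m, (A * (single i j (1:ℂ))ᵀ * B) i j = A i j * B i j := by
    intro i j
    have ht : (single i j (1:ℂ))ᵀ = single j i (1:ℂ) := by
      ext a b; simp [Matrix.single, Matrix.transpose_apply, and_comm]
    rw [ht, Matrix.mul_apply]
    rw [Finset.sum_eq_single i]
    · simp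
    · intro b _ hb; simp [Matrix.mul_single_apply_of_ne _ _ _ _ _ hb]
    · simp
  simp_rw [this]
  rw [Matrix.trace]
  simp [Matrix.diag, Matrix.mul_apply, Matrix.transpose_apply]

end aux

section proj
variable {n : ℕ}

local notation "Jn" => Matrix.J (Fin n) ℂ
local notation "Vn" => Matrix (Fin n ⊕ Fin n) (Fin n ⊕ Fin n) ℂ

theorem hJJ : Jn * Jn = -1 := Matrix.J_squared (Fin n) ℂ
theorem hJT : (Jn)ᵀ = -Jn := Matrix.J_transpose (Fin n) ℂ
theorem hJJW (W : Vn) : Jn * (Jn * W) = -W := by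
  rw [← Matrix.mul_assoc, hJJ, Matrix.neg_mul, Matrix.one_mul]

def thetaM (n : ℕ) : Module.End ℂ Vn := tphiM Jn Jn

def piM (n : ℕ) : Module.End ℂ Vn := (2⁻¹ : ℂ) • (1 + thetaM n)

theorem piM_mem (Y : Vn) : piM n Y ∈ spSub n := by
  apply Submodule.smul_mem
  have : (1 + thetaM n) Y = Y + Jn * Yᵀ * Jn := rfl
  show ((1 + thetaM n) Y) ∈ spSub n
  rw [this]
  show (Y + Jn * Yᵀ * Jn)ᵀ * Jn = -(Jn * (Y + Jn * Yᵀ * Jn))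
  simp only [Matrix.transpose_add, Matrix.transpose_mul, Matrix.transpose_transpose, hJT,
    Matrix.add_mul, Matrix.mul_add, Matrix.neg_mul, Matrix.mul_neg, neg_neg,
    Matrix.mul_assoc, hJJW, hJJ, Matrix.mul_one, Matrix.one_mul, neg_add_rev]

theorem piM_fix (Y : Vn) (hY : Y ∈ spSub n) : piM n Y = Y := by
  have hY' : Yᵀ * Jn = -(Jn * Y) := hY
  have : thetaM n Y = Y := by
    show Jn * Yᵀ * Jn = Y
    rw [Matrix.mul_assoc, hY', Matrix.mul_neg, hJJW, neg_neg]
  show (2⁻¹ : ℂ) • ((1 + thetaM n) Y) = Y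
  rw [LinearMap.add_apply, Module.End.one_apply, this, ← two_smul ℂ, smul_smul]
  norm_num

theorem trace_restrict_eq_trace_comp_piM (g : Module.End ℂ Vn)
    (hg : ∀ Y ∈ spSub n, g Y ∈ spSub n) :
    LinearMap.trace ℂ (spSub n) (g.restrict hg) = LinearMap.trace ℂ Vn (g ∘ₗ piM n) := by
  have hcod : ∀ Y : Vn, piM n Y ∈ spSub n := piM_mem
  set π' : Vn →ₗ[ℂ] spSub n := (piM n).codRestrict (spSub n) hcod with hπ'
  have h1 : g ∘ₗ (piM n : Vn →ₗ[ℂ] Vn) = (spSub n).subtype ∘ₗ ((g.restrict hg) ∘ₗ π') := by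
    ext Y : 1; rfl
  rw [h1, LinearMap.trace_comp_comm']
  have h2 : ((g.restrict hg) ∘ₗ π') ∘ₗ (spSub n).subtype = g.restrict hg := by
    ext y : 1
    simp only [LinearMap.comp_apply]
    congr 1
    exact Subtype.ext (piM_fix _ y.2)
  rw [h2]

end proj

/-- For `X ∈ 𝔰𝔭(2n,ℂ)`, the trace of `(ad X)⁴` on `𝔰𝔭(2n,ℂ)` equals
`(2n+8)·Tr(X⁴) + 3·(Tr(X²))²`. -/
theorem sp_trace_ad_four (n : ℕ) (hn : 1 ≤ n) (X : Matrix (Fin n ⊕ Fin n) (Fin n ⊕ Fin n) ℂ)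
    (hX : Xᵀ * Matrix.J (Fin n) ℂ = -(Matrix.J (Fin n) ℂ * X)) :
    LinearMap.trace ℂ ↥(spSub n) (((adM X).restrict (adM_mem_sp hX)) ^ 4)
      = (2 * (n : ℂ) + 8) * (X ^ 4).trace + 3 * ((X ^ 2).trace) ^ 2 := by
  set Jn := Matrix.J (Fin n) ℂ with hJn
  have hJJ2 : Jn * Jn = -1 := Matrix.J_squared (Fin n) ℂ
  have hJT2 : (Jn)ᵀ = -Jn := Matrix.J_transpose (Fin n) ℂ
  have hJJW2 : ∀ W : Matrix (Fin n ⊕ Fin n) (Fin n ⊕ Fin n) ℂ, Jn * (Jn * W) = -W := fun W => by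
    rw [← Matrix.mul_assoc, hJJ2, Matrix.neg_mul, Matrix.one_mul]
  have htwo : ∀ t : ℂ, t = -t → t = 0 := fun t ht => by
    have h2 : (2 : ℂ) * t = 0 := by linear_combination ht
    exact (mul_eq_zero.mp h2).resolve_left two_ne_zero
  -- basic consequences
  have hXT : Xᵀ = Jn * X * Jn := by
    have h1 : Xᵀ * (Jn * Jn) = -(Jn * X) * Jn := by
      rw [← Matrix.mul_assoc, hX, Matrix.neg_mul]
    rw [hJJ2, Matrix.mul_neg, Matrix.mul_one, Matrix.neg_mul, Matrix.mul_assoc] at h1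
    have h2 := neg_injective h1
    rw [Matrix.mul_assoc]
    exact h2
  have trX : X.trace = 0 := by
    have h1 : X.trace = (Xᵀ).trace := (Matrix.trace_transpose X).symm
    rw [hXT, Matrix.trace_mul_cycle, hJJ2, Matrix.neg_mul, Matrix.one_mul,
      Matrix.trace_neg] at h1
    exact htwo _ h1
  have e3 : X ^ 3 = X * (X * X) := by rw [pow_succ', pow_succ', pow_one]
  have hX3T : (X ^ 3)ᵀ = Jn * X ^ 3 * Jn := by
    rw [Matrix.transpose_pow, hXT, e3]
    rw [pow_succ, pow_succ, pow_one]
    simp [Matrix.mul_assoc, hJJW2, Matrix.mul_neg, Matrix.neg_mul, neg_neg]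
  have trX3 : (X ^ 3).trace = 0 := by
    have h1 : (X ^ 3).trace = ((X ^ 3)ᵀ).trace := (Matrix.trace_transpose _).symm
    rw [hX3T, Matrix.trace_mul_cycle, hJJ2, Matrix.neg_mul, Matrix.one_mul,
      Matrix.trace_neg] at h1
    exact htwo _ h1
  -- split ad X
  have hsplit : adM X = phiM X 1 - phiM 1 X := by
    ext Y : 1
    show X * Y - Y * X = X * Y * 1 - 1 * Y * X
    rw [Matrix.mul_one, Matrix.one_mul]
  -- reduce to full-space traces
  rw [Module.End.pow_restrict, trace_restrict_eq_trace_comp_piM]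
  have hcmp : (adM X ^ 4) ∘ₗ piM n = (2⁻¹ : ℂ) • (adM X ^ 4 + adM X ^ 4 * thetaM n) := by
    show (adM X ^ 4) * piM n = _
    rw [piM, mul_smul_comm, mul_add, mul_one]
  rw [hcmp, _root_.map_smul, map_add]
  -- power association lemmas
  have a2 : X * X = X ^ 2 := (pow_two X).symm
  have a3 : X ^ 2 * X = X ^ 3 := (pow_succ X 2).symm
  have a3' : X * X ^ 2 = X ^ 3 := (pow_succ' X 2).symm
  have a4 : X ^ 3 * X = X ^ 4 := (pow_succ X 3).symm
  have a4' : X * X ^ 3 = X ^ 4 := (pow_succ' X 3).symm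
  have a4'' : X ^ 2 * X ^ 2 = X ^ 4 := by rw [← pow_add]
  have hT1 : LinearMap.trace ℂ _ (adM X ^ 4)
      = 4 * (n : ℂ) * (X ^ 4).trace + 6 * ((X ^ 2).trace) ^ 2 := by
    rw [hsplit]
    simp only [pow_succ, pow_zero, one_mul, mul_sub, sub_mul, map_sub, phiM_comp,
      Matrix.one_mul, Matrix.mul_one, trace_phiM]
    simp only [a2, a3, a3', a4, a4', a4'', trX, trX3, Matrix.trace_one]
    simp only [Fintype.card_sum, Fintype.card_fin]
    push_cast
    ring
  have hT2 : LinearMap.trace ℂ _ (adM X ^ 4 * thetaM n)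
      = 16 * (X ^ 4).trace := by
    rw [hsplit, thetaM, ← hJn]
    simp only [pow_succ, pow_zero, one_mul, mul_sub, sub_mul, map_sub, phiM_comp,
      phiM_comp_tphiM, Matrix.one_mul, Matrix.mul_one, trace_tphiM]
    simp only [Matrix.transpose_mul, hJT2, hXT, Matrix.mul_neg, Matrix.neg_mul,
      Matrix.trace_neg, Matrix.mul_assoc, hJJW2, hJJ2, Matrix.mul_one, Matrix.one_mul, neg_neg]
    simp only [a2, a3, a3', a4, a4', a4'']
    ring
  rw [hT1, hT2, smul_eq_mul]
  push_cast
  ring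

end
end
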